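/- arXiv:1402.7181 — 3 statements merged into one kernel-verified Lean document; each statement's English description precedes it below -/
import Mathlib

section
/- Let h : ℝ³ → ℝ be a smooth harmonic function (Δh = 0 everywhere) and let φ : ℝ → ℝ be differentiable. Define u(x,t) := φ(t)·∇h(x) and p(x,t) := -φ'(t)·h(x). Then at every point (x,t) ∈ ℝ³ × ℝ one has ∂_t u - Δu + ∇p = 0 and div u = 0, i.e. (u,p) is a classical solution of the non-stationary Stokes system. -/
open Set

noncomputable section

/-- ℝ³ as a Euclidean space. -/
abbrev E3 := EuclideanSpace ℝ (Fin 3)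

/-- Spatial partial derivative `∂ᵢ f` at `x`. -/
def pd (i : Fin 3) (f : E3 → ℝ) (x : E3) : ℝ :=
  fderiv ℝ f x (EuclideanSpace.single i 1)

/-- Spatial Laplacian. -/
def lap (f : E3 → ℝ) (x : E3) : ℝ := ∑ i, pd i (fun y => pd i f y) x

lemma contDiff_pd {f : E3 → ℝ} (hf : ContDiff ℝ (⊤ : ℕ∞) f) (i : Fin 3) :
    ContDiff ℝ (⊤ : ℕ∞) (pd i f) :=
  (hf.fderiv_right (by simp)).clm_apply contDiff_const

lemma pd_comm {f : E3 → ℝ} (hf : ContDiff ℝ (⊤ : ℕ∞) f) (i j : Fin 3) (x : E3) :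
    pd i (pd j f) x = pd j (pd i f) x := by
  have hdf : Differentiable ℝ f := hf.differentiable (by simp)
  have hdf' : Differentiable ℝ (fderiv ℝ f) := (hf.fderiv_right (m := (⊤ : ℕ∞)) (by simp)).differentiable (by simp)
  have key : ∀ v w : E3,
      fderiv ℝ (fun y => fderiv ℝ f y v) x w = fderiv ℝ (fderiv ℝ f) x w v := by
    intro v w
    have h1 : HasFDerivAt (fun y => fderiv ℝ f y v)
        ((ContinuousLinearMap.apply ℝ ℝ v).comp (fderiv ℝ (fderiv ℝ f) x)) x :=
      (ContinuousLinearMap.apply ℝ ℝ v).hasFDerivAt.comp x (hdf' x).hasFDerivAt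
    rw [h1.fderiv]; rfl
  have sym := second_derivative_symmetric (f' := fderiv ℝ f) (fun y => (hdf y).hasFDerivAt)
      (hdf' x).hasFDerivAt (EuclideanSpace.single j 1) (EuclideanSpace.single i 1)
  have hdef : ∀ (k : Fin 3) (g : E3 → ℝ), pd k g = fun y => fderiv ℝ g y (EuclideanSpace.single k 1) := fun _ _ => rfl
  simp only [pd, hdef, key]
  exact sym.symm

lemma pd_const_mul {g : E3 → ℝ} (hg : Differentiable ℝ g) (c : ℝ) (i : Fin 3) (x : E3) :
    pd i (fun y => c * g y) x = c * pd i g x := by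
  unfold pd
  rw [fderiv_const_mul (hg x)]
  simp

lemma pd_congr {f g : E3 → ℝ} (hfg : ∀ y, f y = g y) (i : Fin 3) (x : E3) :
    pd i f x = pd i g x := by
  have : f = g := funext hfg
  rw [this]

/-- If `h` is a smooth harmonic function and `φ` is differentiable, then
`u(x,t) = φ(t) ∇h(x)`, `p(x,t) = -φ'(t) h(x)` is a classical solution of the
non-stationary Stokes system `∂ₜ u - Δu + ∇p = 0`, `div u = 0`. -/
theorem stokes_solution_from_harmonic
    (h : E3 → ℝ) (φ : ℝ → ℝ)
    (hh : ContDiff ℝ (⊤ : ℕ∞) h) (hharm : ∀ x, lap h x = 0)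
    (hφ : Differentiable ℝ φ)
    (u : E3 → ℝ → Fin 3 → ℝ) (p : E3 → ℝ → ℝ)
    (hu : ∀ x t i, u x t i = φ t * pd i h x)
    (hp : ∀ x t, p x t = -(deriv φ t) * h x) :
    ∀ (x : E3) (t : ℝ),
      (∀ i : Fin 3,
        deriv (fun s => u x s i) t - lap (fun y => u y t i) x
          + pd i (fun y => p y t) x = 0) ∧
      (∑ i, pd i (fun y => u y t i) x) = 0 := by

  intro x t
  have hpd : ∀ i, ContDiff ℝ (⊤ : ℕ∞) (pd i h) := contDiff_pd hh
  have hd : ∀ i, Differentiable ℝ (pd i h) := fun i => (hpd i).differentiable (by simp)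
  have hpd2 : ∀ i j, ContDiff ℝ (⊤ : ℕ∞) (pd j (pd i h)) := fun i j => contDiff_pd (hpd i) j
  -- laplacian of each component of u is zero
  have e3 : ∀ i : Fin 3, lap (fun y => u y t i) x = 0 := by
    intro i
    have h1 : (fun y => u y t i) = fun y => φ t * pd i h y := funext fun y => hu y t i
    rw [h1]
    unfold lap
    have step : ∀ j : Fin 3,
        pd j (fun y => pd j (fun z => φ t * pd i h z) y) x
          = φ t * pd i (fun y => pd j (fun z => pd j h z) y) x := by
      intro j
      have h2 : ∀ y, pd j (fun z => φ t * pd i h z) y = φ t * pd j (pd i h) y :=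
        fun y => pd_const_mul (hd i) (φ t) j y
      rw [pd_congr h2 j x, pd_const_mul ((hpd2 i j).differentiable (by simp)) (φ t) j x]
      congr 1
      have swap1 : ∀ y, pd j (pd i h) y = pd i (pd j h) y := fun y => pd_comm hh j i y
      rw [pd_congr swap1 j x, pd_comm (hpd j) j i x]
    rw [Finset.sum_congr rfl (fun j _ => step j), ← Finset.mul_sum]
    have hsum : ∑ j : Fin 3, pd i (fun y => pd j (fun z => pd j h z) y) x
        = pd i (fun y => ∑ j : Fin 3, pd j (fun z => pd j h z) y) x := by
      have hds : fderiv ℝ (fun y => ∑ j : Fin 3, pd j (fun z => pd j h z) y) x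
          = ∑ j : Fin 3, fderiv ℝ (fun y => pd j (fun z => pd j h z) y) x :=
        fderiv_fun_sum (fun j _ => ((contDiff_pd (hpd j) j).differentiable (by simp)) x)
      simp only [pd] at hds ⊢
      rw [hds, ContinuousLinearMap.sum_apply]
    rw [hsum]
    have hz : ∀ y, (∑ j : Fin 3, pd j (fun z => pd j h z) y) = (0 : ℝ) := fun y => hharm y
    rw [pd_congr hz i x]
    simp [pd]
  refine ⟨fun i => ?_, ?_⟩
  · have e1 : deriv (fun s => u x s i) t = deriv φ t * pd i h x := by
      have : (fun s => u x s i) = fun s => φ s * pd i h x := funext fun s => hu x s i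
      rw [this, deriv_mul_const (hφ t)]
    have e2 : pd i (fun y => p y t) x = -(deriv φ t) * pd i h x := by
      have h1 : ∀ y, p y t = -(deriv φ t) * h y := fun y => hp y t
      rw [pd_congr h1 i x, pd_const_mul (hh.differentiable (by simp))]
    rw [e1, e2, e3 i]
    ring
  · have h1 : ∀ i : Fin 3, pd i (fun y => u y t i) x = φ t * pd i (pd i h) x := by
      intro i
      have h2 : ∀ y, u y t i = φ t * pd i h y := fun y => hu y t i
      rw [pd_congr h2 i x, pd_const_mul (hd i)]
    rw [Finset.sum_congr rfl (fun i _ => h1 i), ← Finset.mul_sum]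
    have : (∑ i : Fin 3, pd i (pd i h) x) = lap h x := rfl
    rw [this, hharm x, mul_zero]
end
end

section
/- Let φ : ℝ → ℝ be continuous on (-2,0) and let h : ℝ × ℝ → ℝ be such that on (0,∞) × (-2,0) it is twice differentiable in its first (spatial) argument, differentiable in its second (time) argument, and satisfies the forced 1D heat equation ∂_t h(x,t) - ∂_{xx} h(x,t) = φ(t). Define u : ℝ³ × ℝ → ℝ³ by u(x,t) := (h(x₃,t), 0, 0) and p(x,t) := -φ(t)·x₁. Then at every point (x,t) with x₃ > 0 and t ∈ (-2,0): div u = 0, the convective term (u·∇)u vanishes identically, and ∂_t u - Δu + (u·∇)u + ∇p = 0; in particular (u,p) is a classical solution of both the Stokes and the Navier–Stokes systems in ℝ³₊ × (-2,0), where ℝ³₊ := {x ∈ ℝ³ : x₃ > 0}. -/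
open Set

noncomputable section

/-!
The velocity `u = (h(x₃, t), 0, 0)` depends on `x` only through `x₃` and its third component
vanishes, so `div u = ∂₃u₃ = 0` and `(u·∇)u = u₃ ∂₃u = 0`. The Laplacian of `u₁` is `∂ₓₓh`
and `∇p = (-φ(t), 0, 0)`, so the first momentum equation is the forced heat equation for `h`
and the other two read `0 = 0`.
-/

section
variable {ι : Type*} [Fintype ι] [DecidableEq ι]

theorem differentiableAt_comp_apply_iff {g : ℝ → ℝ} {j : ι} {x : EuclideanSpace ℝ ι} :
    DifferentiableAt ℝ (fun y : EuclideanSpace ℝ ι => g (y j)) x ↔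
      DifferentiableAt ℝ g (x j) := by
  refine ⟨fun hf => ?_, fun hg => hg.comp x (EuclideanSpace.proj j (𝕜 := ℝ)).differentiableAt⟩
  set line : ℝ → EuclideanSpace ℝ ι := fun z => x + (z - x j) • EuclideanSpace.single j 1
  have hline : DifferentiableAt ℝ line (x j) := by fun_prop
  have hfac : g = (fun y : EuclideanSpace ℝ ι => g (y j)) ∘ line := by
    funext z; simp [line]
  have hx : line (x j) = x := by simp [line]
  rw [hfac]
  exact (hx ▸ hf).comp (x j) hline

theorem fderiv_comp_apply_single (g : ℝ → ℝ) (i j : ι) (x : EuclideanSpace ℝ ι) :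
    fderiv ℝ (fun y : EuclideanSpace ℝ ι => g (y j)) x (EuclideanSpace.single i 1) =
      if i = j then deriv g (x j) else 0 := by
  by_cases hg : DifferentiableAt ℝ g (x j)
  · have hcomp : HasFDerivAt (fun y : EuclideanSpace ℝ ι => g (y j))
        ((fderiv ℝ g (x j)).comp (EuclideanSpace.proj j)) x :=
      hg.hasFDerivAt.comp x (EuclideanSpace.proj j (𝕜 := ℝ)).hasFDerivAt
    rw [hcomp.fderiv]
    by_cases hij : i = j
    · subst hij; simp
    · simp [hij, Ne.symm hij]
  · rw [fderiv_zero_of_not_differentiableAt (differentiableAt_comp_apply_iff.not.mpr hg),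
      deriv_zero_of_not_differentiableAt hg]
    simp
end

theorem pd_comp_apply (g : ℝ → ℝ) (i j : Fin 3) (x : E3) :
    pd i (fun y => g (y j)) x = if i = j then deriv g (x j) else 0 :=
  fderiv_comp_apply_single g i j x

theorem lap_comp_apply (g : ℝ → ℝ) (j : Fin 3) (x : E3) :
    lap (fun y => g (y j)) x = deriv (deriv g) (x j) := by
  simp only [lap, pd_comp_apply]
  rw [Finset.sum_eq_single j (fun i _ hij => by simp [hij, pd]) (by simp)]
  simp [pd_comp_apply]

section Shear
variable (v : ℝ → Fin 3 → ℝ) (j : Fin 3) (x : E3)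

theorem div_shear_eq_zero (hv : ∀ z, v z j = 0) :
    ∑ i, pd i (fun y => v (y j) i) x = 0 := by
  refine Finset.sum_eq_zero fun i _ => ?_
  rw [pd_comp_apply (fun z => v z i)]
  split_ifs with hij
  · subst hij; simp [hv]
  · rfl

theorem convective_shear_eq_zero (hv : ∀ z, v z j = 0) (i : Fin 3) :
    ∑ k, v (x j) k * pd k (fun y => v (y j) i) x = 0 := by
  simp [pd_comp_apply (fun z => v z i), hv]

end Shear

theorem shear_flow_solves_navier_stokes_general
    (φ : ℝ → ℝ) (h : ℝ → ℝ → ℝ)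
    (hheat : ∀ x : ℝ, 0 < x → ∀ t ∈ Ioo (-2 : ℝ) 0,
      deriv (fun s => h x s) t - deriv (fun y => deriv (fun y' => h y' t) y) x = φ t)
    (u : E3 → ℝ → Fin 3 → ℝ) (p : E3 → ℝ → ℝ)
    (hu : ∀ (x : E3) (t : ℝ), u x t = ![h (x 2) t, 0, 0])
    (hp : ∀ (x : E3) (t : ℝ), p x t = -(φ t) * x 0) :
    ∀ (x : E3), 0 < x 2 → ∀ t ∈ Ioo (-2 : ℝ) 0,
      -- incompressibility
      ((∑ i, pd i (fun y => u y t i) x) = 0) ∧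
      -- the convective term vanishes identically
      (∀ i : Fin 3, (∑ j, u x t j * pd j (fun y => u y t i) x) = 0) ∧
      -- the Navier–Stokes equations hold
      (∀ i : Fin 3,
        deriv (fun s => u x s i) t - lap (fun y => u y t i) x
          + (∑ j, u x t j * pd j (fun y => u y t i) x)
          + pd i (fun y => p y t) x = 0) ∧
      -- the Stokes equations hold
      (∀ i : Fin 3,
        deriv (fun s => u x s i) t - lap (fun y => u y t i) x
          + pd i (fun y => p y t) x = 0) := by
  intro x hx t ht
  set v : ℝ → Fin 3 → ℝ := fun z => ![h z t, 0, 0]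
  have hv : ∀ z, v z 2 = 0 := fun _ => rfl
  have hut : u x t = v (x 2) := hu x t
  have huv : ∀ i, (fun y => u y t i) = fun y => v (y 2) i :=
    fun i => funext fun y => by rw [hu]
  have hconv : ∀ i, ∑ k, u x t k * pd k (fun y => u y t i) x = 0 := fun i => by
    rw [hut, huv]; exact convective_shear_eq_zero v 2 x hv i
  have hstokes : ∀ i, deriv (fun s => u x s i) t - lap (fun y => u y t i) x
      + pd i (fun y => p y t) x = 0 := by
    have hpress : (fun y => p y t) = fun y => (fun z => -φ t * z) (y 0) :=
      funext fun y => hp y t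
    intro i
    rw [huv, lap_comp_apply (fun z => v z i), hpress, pd_comp_apply]
    fin_cases i
    · simp [v, hu, ← hheat (x 2) hx t ht]
    all_goals simp [v, hu]
  refine ⟨?_, hconv, fun i => by rw [hconv, add_zero]; exact hstokes i, hstokes⟩
  simp only [huv]
  exact div_shear_eq_zero v 2 x hv

/-- The shear flow `u(x,t) = (h(x₃,t),0,0)`, `p(x,t) = -φ(t) x₁`, built from a solution
`h` of the forced 1D heat equation `∂ₜ h - ∂ₓₓ h = φ(t)` on `(0,∞) × (-2,0)`, is a
classical solution of both the Stokes and the Navier–Stokes systems in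
`ℝ³₊ × (-2,0)`; in particular `div u = 0` and the convective term vanishes. -/
theorem shear_flow_solves_navier_stokes
    (φ : ℝ → ℝ) (h : ℝ → ℝ → ℝ)
    (hφ : ContinuousOn φ (Ioo (-2 : ℝ) 0))
    (hdiff : ∀ x : ℝ, 0 < x → ∀ t ∈ Ioo (-2 : ℝ) 0,
      DifferentiableAt ℝ (fun y => h y t) x ∧
      DifferentiableAt ℝ (fun y => deriv (fun y' => h y' t) y) x ∧
      DifferentiableAt ℝ (fun s => h x s) t)
    (hheat : ∀ x : ℝ, 0 < x → ∀ t ∈ Ioo (-2 : ℝ) 0,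
      deriv (fun s => h x s) t - deriv (fun y => deriv (fun y' => h y' t) y) x = φ t)
    (u : E3 → ℝ → Fin 3 → ℝ) (p : E3 → ℝ → ℝ)
    (hu : ∀ (x : E3) (t : ℝ), u x t = ![h (x 2) t, 0, 0])
    (hp : ∀ (x : E3) (t : ℝ), p x t = -(φ t) * x 0) :
    ∀ (x : E3), 0 < x 2 → ∀ t ∈ Ioo (-2 : ℝ) 0,
      -- incompressibility
      ((∑ i, pd i (fun y => u y t i) x) = 0) ∧
      -- the convective term vanishes identically
      (∀ i : Fin 3, (∑ j, u x t j * pd j (fun y => u y t i) x) = 0) ∧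
      -- the Navier–Stokes equations hold
      (∀ i : Fin 3,
        deriv (fun s => u x s i) t - lap (fun y => u y t i) x
          + (∑ j, u x t j * pd j (fun y => u y t i) x)
          + pd i (fun y => p y t) x = 0) ∧
      -- the Stokes equations hold
      (∀ i : Fin 3,
        deriv (fun s => u x s i) t - lap (fun y => u y t i) x
          + pd i (fun y => p y t) x = 0) :=
  shear_flow_solves_navier_stokes_general φ h hheat u p hu hp
end
end

section
/- Fix α ∈ (0, 1/2), φ(s) := |s|^{α-1} for s < 0, and let h(x,t) := ∫_{-2}^{t} φ(s) · ( (2/√π) ∫₀^{x/(2√(t-s))} e^{-y²} dy ) ds for x ≥ 0, t ∈ (-2,0). Then: (i) for every t ∈ (-2,0) and every x ≥ 0, the spatial derivative exists and equals ∂_x h(x,t) = (1/√π) ∫_{-2}^{t} |s|^{α-1} (t-s)^{-1/2} e^{-x²/(4(t-s))} ds; (ii) ∂_x h(0,t) = (1/√π) ∫_{-2}^{t} |s|^{α-1} (t-s)^{-1/2} ds tends to +∞ as t → 0⁻; (iii) consequently, for every r ∈ (0, 1/2] and every M > 0 there exists (x,t) with 0 < x < r and -r² < t < 0 such that ∂_x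 h(x,t) > M; in particular ∂_x h is not bounded on (0,r) × (-r², 0) for any r ∈ (0,1/2]. -/
/-!
Differentiating under the integral sign, `∂ₓ Φ(x, τ) = (πτ)^{-1/2} e^{-x²/4τ}`, and on `s ∈ (-2, t)`
the resulting integrand is dominated by the integrable `|t|^{α-1} (t-s)^{-1/2}`; this gives (i).
For `x² ≤ -2t` restrict the integral to `s ∈ [2t, 3t/2]`: there `|s|^{α-1} ≥ (-2t)^{α-1}`,
`(t-s)^{-1/2} ≥ (-t)^{-1/2}` and the Gaussian factor is at least `e^{-1}`, so
`∂ₓ h(x, t) ≥ c (-t)^{α-1/2}`, which tends to `+∞` as `t → 0⁻` since `α < 1/2`.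
Both `x = 0` and `x = -t` satisfy `x² ≤ -2t`, giving (ii) and (iii).
-/

open Set Filter MeasureTheory

noncomputable section

/-- The error-function solution `Φ(x,t) = (2/√π) ∫₀^{x/(2√t)} e^{-y²} dy`. -/
def Phi (x t : ℝ) : ℝ :=
  (2 / Real.sqrt Real.pi) * ∫ y in (0 : ℝ)..(x / (2 * Real.sqrt t)), Real.exp (-y ^ 2)

/-- `h(x,t) = ∫_{-2}^t |s|^{α-1} Φ(x, t-s) ds`. -/
def heatSol (α x t : ℝ) : ℝ :=
  ∫ s in (-2 : ℝ)..t, |s| ^ (α - 1) * Phi x (t - s)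

open Topology Real
open scoped Interval

lemma hasDerivAt_integral_exp_neg_sq (u : ℝ) :
    HasDerivAt (fun v => ∫ y in (0 : ℝ)..v, exp (-y ^ 2)) (exp (-u ^ 2)) u :=
  ((by fun_prop : Continuous fun y : ℝ => exp (-y ^ 2)).integral_hasStrictDerivAt 0 u).hasDerivAt

lemma rpow_neg_half_eq_inv_sqrt {τ : ℝ} (hτ : 0 ≤ τ) : τ ^ (-(1 / 2) : ℝ) = (√τ)⁻¹ := by
  rw [rpow_neg hτ, sqrt_eq_rpow]

lemma hasDerivAt_Phi {τ : ℝ} (hτ : 0 < τ) (x : ℝ) :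
    HasDerivAt (fun y => Phi y τ) (1 / √π * τ ^ (-(1 / 2) : ℝ) * exp (-x ^ 2 / (4 * τ))) x := by
  have hsqrt : 0 < √τ := sqrt_pos.2 hτ
  have hπ : 0 < √π := sqrt_pos.2 pi_pos
  have hchain := ((hasDerivAt_integral_exp_neg_sq (x / (2 * √τ))).comp x
    ((hasDerivAt_id x).div_const (2 * √τ))).const_mul (2 / √π)
  have hexp : -(x / (2 * √τ)) ^ 2 = -x ^ 2 / (4 * τ) := by
    rw [div_pow, mul_pow, sq_sqrt hτ.le]; ring
  refine hchain.congr_deriv ?_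
  rw [hexp, rpow_neg_half_eq_inv_sqrt hτ.le]
  field_simp

lemma abs_Phi_le {τ : ℝ} (hτ : 0 < τ) (x : ℝ) :
    |Phi x τ| ≤ |x| / √π * τ ^ (-(1 / 2) : ℝ) := by
  have hsqrt : 0 < √τ := sqrt_pos.2 hτ
  have hπ : 0 < √π := sqrt_pos.2 pi_pos
  have hint : ‖∫ y in (0 : ℝ)..x / (2 * √τ), exp (-y ^ 2)‖ ≤ 1 * |x / (2 * √τ) - 0| :=
    intervalIntegral.norm_integral_le_of_norm_le_const fun y _ => by
      rw [norm_of_nonneg (exp_pos _).le, exp_le_one_iff, neg_nonpos]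
      exact sq_nonneg y
  rw [norm_eq_abs] at hint
  calc |Phi x τ| = 2 / √π * |∫ y in (0 : ℝ)..x / (2 * √τ), exp (-y ^ 2)| := by
        rw [Phi, abs_mul, abs_of_pos (by positivity)]
    _ ≤ 2 / √π * (1 * |x / (2 * √τ) - 0|) := by gcongr
    _ = |x| / √π * τ ^ (-(1 / 2) : ℝ) := by
        rw [sub_zero, abs_div, abs_of_pos (by positivity : (0 : ℝ) < 2 * √τ),
          rpow_neg_half_eq_inv_sqrt hτ.le]
        field_simp

@[fun_prop]
lemma measurable_Phi (x : ℝ) : Measurable (Phi x) := by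
  have hG : Measurable fun v => ∫ y in (0 : ℝ)..v, exp (-y ^ 2) :=
    (continuous_iff_continuousAt.2 fun u =>
      (hasDerivAt_integral_exp_neg_sq u).continuousAt).measurable
  unfold Phi
  fun_prop

lemma intervalIntegrable_sub_rpow {r : ℝ} (hr : -1 < r) (a t : ℝ) :
    IntervalIntegrable (fun s => (t - s) ^ r) volume a t := by
  simpa using (intervalIntegral.intervalIntegrable_rpow' (a := t - a) (b := 0) hr).comp_sub_left t

lemma abs_rpow_le_abs_rpow_of_le {p s t : ℝ} (hp : p ≤ 0) (ht : t < 0) (hst : s ≤ t) :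
    |s| ^ p ≤ |t| ^ p :=
  rpow_le_rpow_of_nonpos (abs_pos.2 ht.ne)
    (by rw [abs_of_neg ht, abs_of_neg (hst.trans_lt ht)]; linarith) hp

lemma tendsto_const_mul_neg_rpow_nhdsLT_zero {c p : ℝ} (hc : 0 < c) (hp : p < 0) :
    Tendsto (fun t : ℝ => c * (-t) ^ p) (𝓝[<] 0) atTop :=
  ((tendsto_rpow_neg_nhdsGT_zero hp).const_mul_atTop hc).comp
    (by simpa using tendsto_neg_nhdsLT (a := (0 : ℝ)))

lemma ae_mem_Ioo_of_mem_uIoc {a t : ℝ} (hat : a ≤ t) : ∀ᵐ s ∂volume, s ∈ Ι a t → s ∈ Ioo a t := by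
  filter_upwards [Measure.ae_ne volume t] with s hst hs
  rw [uIoc_of_le hat] at hs
  exact ⟨hs.1, lt_of_le_of_ne hs.2 hst⟩

def heatSolDerivIntegrand (α t x s : ℝ) : ℝ :=
  |s| ^ (α - 1) * (t - s) ^ (-(1 / 2) : ℝ) * exp (-x ^ 2 / (4 * (t - s)))

section Integrand

variable {α t : ℝ}

lemma heatSolDerivIntegrand_nonneg (x : ℝ) {s : ℝ} (hs : s ≤ t) :
    0 ≤ heatSolDerivIntegrand α t x s := by
  unfold heatSolDerivIntegrand
  have : 0 ≤ (t - s) ^ (-(1 / 2) : ℝ) := rpow_nonneg (by linarith) _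
  positivity

lemma heatSolDerivIntegrand_le (hα : α ≤ 1) (ht : t < 0) (x : ℝ) {s : ℝ} (hs : s ≤ t) :
    heatSolDerivIntegrand α t x s ≤ |t| ^ (α - 1) * (t - s) ^ (-(1 / 2) : ℝ) := by
  have hexp : exp (-x ^ 2 / (4 * (t - s))) ≤ 1 :=
    exp_le_one_iff.2 (div_nonpos_of_nonpos_of_nonneg (neg_nonpos.2 (sq_nonneg x)) (by linarith))
  have hpow : 0 ≤ (t - s) ^ (-(1 / 2) : ℝ) := rpow_nonneg (by linarith) _
  calc heatSolDerivIntegrand α t x s ≤ |s| ^ (α - 1) * (t - s) ^ (-(1 / 2) : ℝ) * 1 := by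
        unfold heatSolDerivIntegrand; gcongr
    _ ≤ |t| ^ (α - 1) * (t - s) ^ (-(1 / 2) : ℝ) := by
        rw [mul_one]
        exact mul_le_mul_of_nonneg_right (abs_rpow_le_abs_rpow_of_le (by linarith) ht hs) hpow

lemma measurable_heatSolDerivIntegrand (α t x : ℝ) :
    Measurable (heatSolDerivIntegrand α t x) := by
  unfold heatSolDerivIntegrand
  fun_prop

lemma intervalIntegrable_heatSolDerivIntegrand (hα : α ≤ 1) (ht : t < 0) (x : ℝ) {a : ℝ}
    (hat : a ≤ t) : IntervalIntegrable (heatSolDerivIntegrand α t x) volume a t := by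
  refine ((intervalIntegrable_sub_rpow (r := -(1 / 2)) (by norm_num) a t).const_mul
    (|t| ^ (α - 1))).mono_fun (measurable_heatSolDerivIntegrand α t x).aestronglyMeasurable ?_
  filter_upwards [ae_restrict_mem measurableSet_uIoc] with s hs
  rw [uIoc_of_le hat] at hs
  rw [norm_of_nonneg (heatSolDerivIntegrand_nonneg x hs.2),
    norm_of_nonneg (mul_nonneg (rpow_nonneg (abs_nonneg t) _) (rpow_nonneg (by linarith [hs.2]) _))]
  exact heatSolDerivIntegrand_le hα ht x hs.2

end Integrand

lemma intervalIntegrable_heatSolIntegrand {α t : ℝ} (hα : α ≤ 1) (ht : t < 0) (x : ℝ) {a : ℝ}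
    (hat : a ≤ t) : IntervalIntegrable (fun s => |s| ^ (α - 1) * Phi x (t - s)) volume a t := by
  refine ((intervalIntegrable_sub_rpow (r := -(1 / 2)) (by norm_num) a t).const_mul
    (|t| ^ (α - 1) * (|x| / √π))).mono_fun (by fun_prop : Measurable _).aestronglyMeasurable ?_
  filter_upwards [(ae_restrict_iff' measurableSet_uIoc).2 (ae_mem_Ioo_of_mem_uIoc hat)] with s hs
  have hts : 0 < t - s := sub_pos.2 hs.2
  calc ‖|s| ^ (α - 1) * Phi x (t - s)‖ = |s| ^ (α - 1) * |Phi x (t - s)| := by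
        rw [norm_mul, norm_eq_abs, norm_eq_abs, abs_of_nonneg (rpow_nonneg (abs_nonneg s) _)]
    _ ≤ |t| ^ (α - 1) * (|x| / √π * (t - s) ^ (-(1 / 2) : ℝ)) :=
        mul_le_mul (abs_rpow_le_abs_rpow_of_le (by linarith) ht hs.2.le) (abs_Phi_le hts x)
          (abs_nonneg _) (rpow_nonneg (abs_nonneg t) _)
    _ ≤ ‖|t| ^ (α - 1) * (|x| / √π) * (t - s) ^ (-(1 / 2) : ℝ)‖ := by
        rw [norm_eq_abs, ← mul_assoc]
        exact le_abs_self _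

lemma hasDerivAt_heatSol {α t : ℝ} (hα : α ≤ 1) (h2t : -2 ≤ t) (ht : t < 0) (x : ℝ) :
    HasDerivAt (fun y => heatSol α y t)
      (1 / √π * ∫ s in (-2 : ℝ)..t, heatSolDerivIntegrand α t x s) x := by
  have hF'_bound : ∀ᵐ s ∂volume, s ∈ Ι (-2) t → ∀ z ∈ (univ : Set ℝ),
      ‖1 / √π * heatSolDerivIntegrand α t z s‖ ≤
        1 / √π * (|t| ^ (α - 1) * (t - s) ^ (-(1 / 2) : ℝ)) := by
    filter_upwards [ae_mem_Ioo_of_mem_uIoc h2t] with s hs hsmem z _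
    have hst := (hs hsmem).2.le
    rw [norm_of_nonneg (mul_nonneg (by positivity) (heatSolDerivIntegrand_nonneg z hst))]
    gcongr
    exact heatSolDerivIntegrand_le hα ht z hst
  have hF'_deriv : ∀ᵐ s ∂volume, s ∈ Ι (-2) t → ∀ z ∈ (univ : Set ℝ),
      HasDerivAt (fun y => |s| ^ (α - 1) * Phi y (t - s))
        (1 / √π * heatSolDerivIntegrand α t z s) z := by
    filter_upwards [ae_mem_Ioo_of_mem_uIoc h2t] with s hs hsmem z _
    refine ((hasDerivAt_Phi (sub_pos.2 (hs hsmem).2) z).const_mul (|s| ^ (α - 1))).congr_deriv ?_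
    unfold heatSolDerivIntegrand
    ring
  rw [← intervalIntegral.integral_const_mul]
  exact (intervalIntegral.hasDerivAt_integral_of_dominated_loc_of_deriv_le univ_mem
    (.of_forall fun z => (by fun_prop : Measurable fun s => |s| ^ (α - 1) * Phi z (t - s))
      |>.aestronglyMeasurable)
    (intervalIntegrable_heatSolIntegrand hα ht x h2t)
    ((measurable_heatSolDerivIntegrand α t x).const_mul _).aestronglyMeasurable hF'_bound
    ((intervalIntegrable_sub_rpow (r := -(1 / 2)) (by norm_num) (-2) t).const_mul _ |>.const_mul _)
    hF'_deriv).2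

section LowerBound

variable {α t : ℝ}

lemma heatSolDerivIntegrand_ge (hα : α ≤ 1) (ht : t < 0) {x s : ℝ} (hx : x ^ 2 ≤ -2 * t)
    (hs : s ∈ Icc (2 * t) (3 * t / 2)) :
    (-2 * t) ^ (α - 1) * (-t) ^ (-(1 / 2) : ℝ) * exp (-1) ≤ heatSolDerivIntegrand α t x s := by
  obtain ⟨hs₁, hs₂⟩ := hs
  have hts : 0 < t - s := by linarith
  have hnt : 0 ≤ (-t) ^ (-(1 / 2) : ℝ) := rpow_nonneg (by linarith) _
  have habs : (-2 * t) ^ (α - 1) ≤ |s| ^ (α - 1) :=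
    rpow_le_rpow_of_nonpos (abs_pos.2 (by linarith)) (by rw [abs_of_neg (by linarith)]; linarith)
      (by linarith)
  have hpow : (-t) ^ (-(1 / 2) : ℝ) ≤ (t - s) ^ (-(1 / 2) : ℝ) :=
    rpow_le_rpow_of_nonpos hts (by linarith) (by norm_num)
  have hexp : exp (-1) ≤ exp (-x ^ 2 / (4 * (t - s))) := by
    rw [exp_le_exp, neg_div, neg_le_neg_iff, div_le_one (by positivity)]
    linarith
  unfold heatSolDerivIntegrand
  gcongr

lemma integral_heatSolDerivIntegrand_ge (hα : α ≤ 1) (h1t : -1 ≤ t) (ht : t < 0) {x : ℝ}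
    (hx : x ^ 2 ≤ -2 * t) :
    2 ^ (α - 2) * exp (-1) * (-t) ^ (α - 1 / 2) ≤
      ∫ s in (-2 : ℝ)..t, heatSolDerivIntegrand α t x s := by
  have hnt : 0 < -t := by linarith
  have hconst : (-2 * t) ^ (α - 1) * (-t) ^ (-(1 / 2) : ℝ) * exp (-1) * (3 * t / 2 - 2 * t) =
      2 ^ (α - 2) * exp (-1) * (-t) ^ (α - 1 / 2) := by
    have h2 : (2 : ℝ) ^ (α - 2) = 2 ^ (α - 1) / 2 := by
      rw [show α - 2 = α - 1 - 1 by ring, rpow_sub_one two_ne_zero]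
    have ht' : (-t) ^ (α - 1 / 2) = (-t) ^ (α - 1) * (-t) ^ (-(1 / 2) : ℝ) * (-t) := by
      rw [← rpow_add hnt, ← rpow_add_one hnt.ne']; ring_nf
    rw [show -2 * t = 2 * -t by ring, mul_rpow two_pos.le hnt.le, h2, ht']
    ring
  calc 2 ^ (α - 2) * exp (-1) * (-t) ^ (α - 1 / 2)
      = ∫ _ in (2 * t)..(3 * t / 2), (-2 * t) ^ (α - 1) * (-t) ^ (-(1 / 2) : ℝ) * exp (-1) := by
        rw [intervalIntegral.integral_const, smul_eq_mul, ← hconst]; ring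
    _ ≤ ∫ s in (2 * t)..(3 * t / 2), heatSolDerivIntegrand α t x s :=
        intervalIntegral.integral_mono_on (by linarith) intervalIntegrable_const
          (intervalIntegrable_heatSolDerivIntegrand hα ht x (a := -2) (by linarith) |>.mono_set
            (by rw [uIcc_of_le (by linarith), uIcc_of_le (by linarith)]
                exact Icc_subset_Icc (by linarith) (by linarith)))
          fun s hs => heatSolDerivIntegrand_ge hα ht hx hs
    _ ≤ ∫ s in (-2 : ℝ)..t, heatSolDerivIntegrand α t x s :=
        intervalIntegral.integral_mono_interval (by linarith) (by linarith) (by linarith)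
          ((ae_restrict_iff' measurableSet_Ioc).2 (.of_forall fun _ hs =>
            heatSolDerivIntegrand_nonneg x hs.2))
          (intervalIntegrable_heatSolDerivIntegrand hα ht x (a := -2) (by linarith))

end LowerBound

lemma deriv_heatSol_ge {α t : ℝ} (hα : α ≤ 1) (h1t : -1 ≤ t) (ht : t < 0) {x : ℝ}
    (hx : x ^ 2 ≤ -2 * t) :
    1 / √π * (2 ^ (α - 2) * exp (-1)) * (-t) ^ (α - 1 / 2) ≤ deriv (fun y => heatSol α y t) x := by
  rw [(hasDerivAt_heatSol hα (by linarith) ht x).deriv, mul_assoc]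
  gcongr
  exact integral_heatSolDerivIntegrand_ge hα h1t ht hx

/-- Unboundedness of the spatial derivative of the counterexample solution `h`:
(i) `∂ₓ h` exists with the explicit formula; (ii) at `x = 0` it equals
`(1/√π) ∫_{-2}^t |s|^{α-1} (t-s)^{-1/2} ds`, which tends to `+∞` as `t → 0⁻`;
(iii) hence `∂ₓ h` is unbounded on `(0,r) × (-r²,0)` for every `r ∈ (0,1/2]`. -/
theorem gradient_of_counterexample_unbounded (α : ℝ) (hα : α ∈ Ioo (0 : ℝ) (1 / 2)) :
    -- (i) existence and formula for the spatial derivative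
    (∀ t ∈ Ioo (-2 : ℝ) 0, ∀ x : ℝ, 0 ≤ x →
      HasDerivAt (fun y => heatSol α y t)
        ((1 / Real.sqrt Real.pi) *
          ∫ s in (-2 : ℝ)..t, |s| ^ (α - 1) * (t - s) ^ (-(1 / 2) : ℝ) *
            Real.exp (-x ^ 2 / (4 * (t - s)))) x) ∧
    -- (ii) the value at `x = 0` and its blow-up as `t → 0⁻`
    (∀ t ∈ Ioo (-2 : ℝ) 0,
      deriv (fun y => heatSol α y t) 0
        = (1 / Real.sqrt Real.pi) *
            ∫ s in (-2 : ℝ)..t, |s| ^ (α - 1) * (t - s) ^ (-(1 / 2) : ℝ)) ∧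
    Tendsto (fun t => deriv (fun y => heatSol α y t) 0)
      (nhdsWithin 0 (Iio 0)) atTop ∧
    -- (iii) unboundedness of `∂ₓ h` on `(0,r) × (-r²,0)` for every `r ∈ (0,1/2]`
    (∀ r ∈ Ioc (0 : ℝ) (1 / 2), ∀ M : ℝ, 0 < M →
      ∃ x t : ℝ, 0 < x ∧ x < r ∧ -r ^ 2 < t ∧ t < 0 ∧
        M < deriv (fun y => heatSol α y t) x) := by
  have hα1 : α ≤ 1 := by linarith [hα.2]
  have hblowup := tendsto_const_mul_neg_rpow_nhdsLT_zero
    (by positivity : 0 < 1 / √π * (2 ^ (α - 2) * exp (-1))) (by linarith [hα.2] : α - 1 / 2 < 0)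
  refine ⟨fun t ht x _ => hasDerivAt_heatSol hα1 ht.1.le ht.2 x, fun t ht => ?_, ?_, ?_⟩
  · rw [(hasDerivAt_heatSol hα1 ht.1.le ht.2 0).deriv]
    simp [heatSolDerivIntegrand]
  · refine tendsto_atTop_mono' _ ?_ hblowup
    filter_upwards [Ioo_mem_nhdsLT (by norm_num : (-1 : ℝ) < 0)] with t ht
    exact deriv_heatSol_ge hα1 ht.1.le ht.2 (by rw [zero_pow two_ne_zero]; linarith [ht.2])
  · intro r hr M _
    obtain ⟨t, hMt, ht⟩ := ((hblowup.eventually_gt_atTop M).and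
      (Ioo_mem_nhdsLT (by nlinarith [hr.1] : -r ^ 2 < 0))).exists
    have hr2 : r ^ 2 < r := by nlinarith [hr.1, hr.2]
    have h1t : -1 ≤ t := by linarith [ht.1, hr.2]
    refine ⟨-t, t, by linarith [ht.2], by linarith [ht.1], ht.1, ht.2, ?_⟩
    exact hMt.trans_le (deriv_heatSol_ge hα1 h1t ht.2 (by nlinarith [ht.2]))
end
end
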